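/- Let T > 0, c₁ > 0, p > 0 and p' ≥ max(1,p). There exists a constant C < ∞, depending only on (p, p', T, c₁), such that the following holds. Let n ≥ 1; for k = 1,…,n let x^k, w^k, β ∈ C([0,T];ℝ^d) with w^k_0 = β_0 = 0, and let g^k : [0,T] → ℝ^d be Borel measurable and integrable, satisfying for all k and all t ∈ [0,T]: x^k_t = x^k_0 + ∫₀ᵗ g^k(s) ds + w^k_t + β_t, and for almost every s ∈ [0,T] and all k: |g^k(s)| ≤ c₁ ( 1 + |x^k_s| + ( (1/n) Σ_{j=1}^n |x^j_s|^p )^{1/max(1,p)} ). Then (1/n) Σ_{k=1}^n ‖x^k‖_T^{p'} ≤ C ( 1 + (1/n) Σ_{k=1}^n |x^k_0|^{p'} + (1/n) Σ_{k=1}^n ‖w^k‖_T^{p'} + ‖β‖_T^{p'} ). -/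

import Mathlib

open MeasureTheory Set

noncomputable section

/-- Truncated supremum norm `‖x‖_t = sup_{s ∈ [0,t]} |x_s|` of a path `x : ℝ → ℝ^d`. -/
def pathSup {d : ℕ} (x : ℝ → EuclideanSpace ℝ (Fin d)) (t : ℝ) : ℝ :=
  ⨆ s : Icc (0 : ℝ) t, ‖x s.1‖

/-!
Each particle satisfies `‖x^k‖_t ≤ R_k + ∫₀ᵗ h_k`, where `R_k = |x^k_0| + ‖w^k‖_T + ‖β‖_T`
and `h_k` is the bound on the drift. Raising this to the power `p' ≥ 1` (Jensen's inequality
in time) and controlling the interaction term through the power-mean inequality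
`((1/n) Σ_j |x^j|^p)^(p'/max(1,p)) ≤ 1 + (1/n) Σ_j |x^j|^p'`, the average
`φ(t) = (1/n) Σ_k ‖x^k‖_t^p'` satisfies `φ(t) ≤ A + K ∫₀ᵗ ψ`, where
`ψ(s) = (1/n) Σ_k |x^k_s|^p'`. Since `ψ ≤ φ`, Grönwall's inequality for the continuous
function `ψ` gives `φ(T) ≤ A e^(KT)`, and `A` is affine in the data.
-/

lemma rpow_le_one_add_rpow {a s q : ℝ} (ha : 0 ≤ a) (hs : 0 ≤ s) (hsq : s ≤ q) :
    a ^ s ≤ 1 + a ^ q := by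
  rcases le_total a 1 with h | h
  · linarith [Real.rpow_le_one ha h hs, Real.rpow_nonneg ha q]
  · linarith [Real.rpow_le_rpow_of_exponent_le h hsq]

lemma add_rpow_le_two_rpow {a b q : ℝ} (ha : 0 ≤ a) (hb : 0 ≤ b) (hq : 1 ≤ q) :
    (a + b) ^ q ≤ 2 ^ (q - 1) * (a ^ q + b ^ q) := by
  simpa [Fin.sum_univ_two] using
    Real.rpow_sum_le_const_mul_sum_rpow_of_nonneg (s := Finset.univ) (f := ![a, b]) hq
      (by simp [Fin.forall_fin_two, ha, hb])

lemma add_add_rpow_le_three_rpow {a b c q : ℝ} (ha : 0 ≤ a) (hb : 0 ≤ b) (hc : 0 ≤ c)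
    (hq : 1 ≤ q) : (a + b + c) ^ q ≤ 3 ^ (q - 1) * (a ^ q + b ^ q + c ^ q) := by
  simpa [Fin.sum_univ_three, add_assoc] using
    Real.rpow_sum_le_const_mul_sum_rpow_of_nonneg (s := Finset.univ) (f := ![a, b, c]) hq
      (by simp [Fin.forall_fin_succ, ha, hb, hc])

lemma mean_const_add {n : ℕ} (hn : n ≠ 0) (c : ℝ) (b : Fin n → ℝ) :
    (1 / (n:ℝ)) * ∑ j, (c + b j) = c + (1 / (n:ℝ)) * ∑ j, b j := by
  rw [Finset.sum_add_distrib, mul_add]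
  simp [hn]

lemma mean_add_add_rpow_le {n : ℕ} (hn : n ≠ 0) {a b : Fin n → ℝ} {c q : ℝ}
    (ha : ∀ k, 0 ≤ a k) (hb : ∀ k, 0 ≤ b k) (hc : 0 ≤ c) (hq : 1 ≤ q) :
    (1 / (n:ℝ)) * ∑ k, (a k + b k + c) ^ q ≤
      3 ^ (q - 1) * ((1 / (n:ℝ)) * ∑ k, a k ^ q + (1 / (n:ℝ)) * ∑ k, b k ^ q + c ^ q) := by
  calc (1 / (n:ℝ)) * ∑ k, (a k + b k + c) ^ q
      ≤ (1 / (n:ℝ)) * ∑ k, 3 ^ (q - 1) * (c ^ q + (a k ^ q + b k ^ q)) := by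
        gcongr with k
        linarith [add_add_rpow_le_three_rpow (ha k) (hb k) hc hq]
    _ = _ := by
        rw [← Finset.mul_sum, mul_left_comm, mean_const_add hn, Finset.sum_add_distrib]
        ring

lemma rpow_mean_rpow_le_one_add_mean_rpow {n : ℕ} (hn : n ≠ 0) {a : Fin n → ℝ}
    (ha : ∀ j, 0 ≤ a j) {p q : ℝ} (hp : 0 ≤ p) (hq : max 1 p ≤ q) :
    (((1 / (n:ℝ)) * ∑ j, a j ^ p) ^ (1 / max 1 p)) ^ q ≤
      1 + (1 / (n:ℝ)) * ∑ j, a j ^ q := by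
  set m := max 1 p
  have hm : 0 < m := lt_of_lt_of_le one_pos (le_max_left _ _)
  have hr : 1 ≤ q / m := (one_le_div hm).mpr hq
  have hpower_mean := Real.rpow_arith_mean_le_arith_mean_rpow Finset.univ (fun _ => 1 / (n:ℝ))
    (fun j => a j ^ p) (fun _ _ => by positivity) (by simp [hn])
    (fun j _ => Real.rpow_nonneg (ha j) p) hr
  rw [← Finset.mul_sum] at hpower_mean
  calc (((1 / (n:ℝ)) * ∑ j, a j ^ p) ^ (1 / m)) ^ q
      = ((1 / (n:ℝ)) * ∑ j, a j ^ p) ^ (q / m) := by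
        rw [← Real.rpow_mul (mul_nonneg (by positivity)
          (Finset.sum_nonneg fun j _ => Real.rpow_nonneg (ha j) p))]
        ring_nf
    _ ≤ ∑ j, 1 / (n:ℝ) * (a j ^ p) ^ (q / m) := hpower_mean
    _ ≤ ∑ j, 1 / (n:ℝ) * (1 + a j ^ q) := by
        gcongr with j
        rw [← Real.rpow_mul (ha j)]
        refine rpow_le_one_add_rpow (ha j) (by positivity) ?_
        rw [mul_div_assoc']
        exact div_le_of_le_mul₀ hm.le (by linarith) (by nlinarith [le_max_right 1 p])
    _ = 1 + (1 / (n:ℝ)) * ∑ j, a j ^ q := by rw [← Finset.mul_sum, mean_const_add hn]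

lemma intervalIntegral_rpow_le_mul_integral_rpow {h : ℝ → ℝ} (hc : Continuous h)
    (hpos : ∀ s, 0 ≤ h s) {q t : ℝ} (hq : 1 ≤ q) (ht : 0 ≤ t) :
    (∫ s in (0:ℝ)..t, h s) ^ q ≤ t ^ (q - 1) * ∫ s in (0:ℝ)..t, h s ^ q := by
  rcases ht.eq_or_lt with rfl | ht
  · simp [Real.zero_rpow (by linarith : q ≠ 0)]
  have hvol : volume.real (Ioc 0 t) = t := by simp [ht.le]
  have hjensen := (convexOn_rpow hq).map_set_average_le
    (Real.continuous_rpow_const (by linarith)).continuousOn isClosed_Ici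
    (by simp [ht]) (by simp) (.of_forall fun s => hpos s) (hc.integrableOn_Ioc)
    ((hc.rpow_const fun _ => Or.inr (by linarith)).integrableOn_Ioc)
    (μ := volume) (t := Ioc 0 t)
  simp only [setAverage_eq, hvol, smul_eq_mul] at hjensen
  rw [intervalIntegral.integral_of_le ht.le, intervalIntegral.integral_of_le ht.le]
  rw [Real.mul_rpow (by positivity) (setIntegral_nonneg measurableSet_Ioc fun s _ => hpos s),
    Real.inv_rpow ht.le] at hjensen
  have htq : 0 < t ^ q := by positivity
  rw [Real.rpow_sub_one ht.ne']
  calc _ = t ^ q * ((t ^ q)⁻¹ * (∫ s in Ioc 0 t, h s) ^ q) := by field_simp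
    _ ≤ t ^ q * (t⁻¹ * ∫ s in Ioc 0 t, h s ^ q) := by gcongr
    _ = _ := by ring

lemma mul_gronwallBound_zero (K ε x : ℝ) :
    K * gronwallBound 0 K ε x = ε * (Real.exp (K * x) - 1) := by
  rcases eq_or_ne K 0 with rfl | hK
  · simp [gronwallBound_K0]
  · rw [gronwallBound_of_K_ne_0 hK]; field_simp; ring

lemma add_mul_integral_le_mul_exp_of_le_add_mul_integral {ψ : ℝ → ℝ} (hψ : Continuous ψ)
    {A B T : ℝ} (hB : 0 ≤ B) (hT : 0 ≤ T)
    (h : ∀ t ∈ Icc (0:ℝ) T, ψ t ≤ A + B * ∫ s in (0:ℝ)..t, ψ s) :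
    A + B * ∫ s in (0:ℝ)..T, ψ s ≤ A * Real.exp (B * T) := by
  -- Grönwall for `F t = ∫₀ᵗ ψ`, whose derivative is `ψ ≤ A + B F`.
  have hderiv (t : ℝ) : HasDerivAt (fun u => ∫ s in (0:ℝ)..u, ψ s) (ψ t) t :=
    hψ.integral_hasStrictDerivAt 0 t |>.hasDerivAt
  have hgron := le_gronwallBound_of_liminf_deriv_right_le (δ := 0) (K := B) (ε := A)
    (fun t _ => (hderiv t).continuousAt.continuousWithinAt)
    (fun t _ r hr => (hderiv t).hasDerivWithinAt.liminf_right_slope_le hr)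
    (by simp) (fun t ht => by linarith [h t (Ico_subset_Icc_self ht)]) T ⟨hT, le_rfl⟩
  have := mul_le_mul_of_nonneg_left hgron hB
  rw [sub_zero, mul_gronwallBound_zero] at this
  linarith

section PathSup

variable {d : ℕ} {x : ℝ → EuclideanSpace ℝ (Fin d)}

lemma pathSup_nonneg (x : ℝ → EuclideanSpace ℝ (Fin d)) (t : ℝ) : 0 ≤ pathSup x t :=
  Real.iSup_nonneg fun _ => norm_nonneg _

lemma norm_le_pathSup (hx : Continuous x) {s t : ℝ} (hs : s ∈ Icc 0 t) :
    ‖x s‖ ≤ pathSup x t := by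
  have hbdd := ((isCompact_Icc (a := 0) (b := t)).image hx.norm).bddAbove
  rw [image_eq_range] at hbdd
  exact le_ciSup hbdd (⟨s, hs⟩ : Icc (0:ℝ) t)

lemma pathSup_le {t M : ℝ} (ht : 0 ≤ t) (h : ∀ s ∈ Icc 0 t, ‖x s‖ ≤ M) :
    pathSup x t ≤ M :=
  have : Nonempty (Icc (0:ℝ) t) := ⟨⟨0, le_rfl, ht⟩⟩
  ciSup_le fun s => h s.1 s.2

lemma pathSup_le_add_integral {w β g : ℝ → EuclideanSpace ℝ (Fin d)} {h : ℝ → ℝ}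
    {T t : ℝ} (hw : Continuous w) (hβ : Continuous β) (hg : IntervalIntegrable g volume 0 T)
    (hh : IntervalIntegrable h volume 0 T)
    (hx : ∀ t ∈ Icc 0 T, x t = x 0 + (∫ s in (0:ℝ)..t, g s) + w t + β t)
    (hgh : ∀ᵐ s ∂(volume.restrict (Icc 0 T)), ‖g s‖ ≤ h s) (ht : t ∈ Icc 0 T) :
    pathSup x t ≤ ‖x 0‖ + pathSup w T + pathSup β T + ∫ s in (0:ℝ)..t, h s := by
  have hsub {a b : ℝ} (ha : 0 ≤ a) (hab : a ≤ b) (hb : b ≤ T) : uIcc a b ⊆ uIcc 0 T := by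
    rw [uIcc_of_le hab, uIcc_of_le (ha.trans (hab.trans hb))]
    exact Icc_subset_Icc ha hb
  have hgh' {b : ℝ} (hb : b ≤ T) : ∀ᵐ s ∂(volume.restrict (Icc 0 b)), ‖g s‖ ≤ h s :=
    ae_restrict_of_ae_restrict_of_subset (Icc_subset_Icc le_rfl hb) hgh
  refine pathSup_le ht.1 fun s hs => ?_
  have hsT : s ∈ Icc 0 T := ⟨hs.1, hs.2.trans ht.2⟩
  have hgs : ‖∫ u in (0:ℝ)..s, g u‖ ≤ ∫ u in (0:ℝ)..s, h u :=
    (intervalIntegral.norm_integral_le_integral_norm hs.1).trans <|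
      intervalIntegral.integral_mono_ae_restrict hs.1
        ((hg.mono_set (hsub le_rfl hs.1 hsT.2)).norm) (hh.mono_set (hsub le_rfl hs.1 hsT.2))
        (hgh' hsT.2)
  have hst : ∫ u in (0:ℝ)..s, h u ≤ ∫ u in (0:ℝ)..t, h u := by
    refine intervalIntegral.integral_mono_interval le_rfl hs.1 hs.2 ?_
      (hh.mono_set (hsub le_rfl ht.1 ht.2))
    filter_upwards [ae_restrict_of_ae_restrict_of_subset Ioc_subset_Icc_self (hgh' ht.2)]
      with u hu using (norm_nonneg _).trans hu
  calc ‖x s‖ = ‖x 0 + (∫ u in (0:ℝ)..s, g u) + w s + β s‖ := by rw [← hx s hsT]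
    _ ≤ ‖x 0‖ + ‖∫ u in (0:ℝ)..s, g u‖ + ‖w s‖ + ‖β s‖ := norm_add₄_le
    _ ≤ _ := by linarith [norm_le_pathSup hw hsT, norm_le_pathSup hβ hsT]

lemma pathSup_rpow_le {w β g : ℝ → EuclideanSpace ℝ (Fin d)} {h : ℝ → ℝ} {T t q : ℝ}
    (hw : Continuous w) (hβ : Continuous β) (hg : IntervalIntegrable g volume 0 T)
    (hh : Continuous h) (hh0 : ∀ s, 0 ≤ h s)
    (hx : ∀ t ∈ Icc 0 T, x t = x 0 + (∫ s in (0:ℝ)..t, g s) + w t + β t)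
    (hgh : ∀ᵐ s ∂(volume.restrict (Icc 0 T)), ‖g s‖ ≤ h s) (hq : 1 ≤ q)
    (ht : t ∈ Icc 0 T) :
    pathSup x t ^ q ≤ 2 ^ (q - 1) * ((‖x 0‖ + pathSup w T + pathSup β T) ^ q
      + T ^ (q - 1) * ∫ s in (0:ℝ)..t, h s ^ q) := by
  have hR : 0 ≤ ‖x 0‖ + pathSup w T + pathSup β T := by
    linarith [norm_nonneg (x 0), pathSup_nonneg w T, pathSup_nonneg β T]
  have hH : 0 ≤ ∫ s in (0:ℝ)..t, h s := intervalIntegral.integral_nonneg ht.1 fun s _ => hh0 s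
  have hHq : 0 ≤ ∫ s in (0:ℝ)..t, h s ^ q :=
    intervalIntegral.integral_nonneg ht.1 fun s _ => Real.rpow_nonneg (hh0 s) q
  calc pathSup x t ^ q
      ≤ (‖x 0‖ + pathSup w T + pathSup β T + ∫ s in (0:ℝ)..t, h s) ^ q :=
        Real.rpow_le_rpow (pathSup_nonneg _ _)
          (pathSup_le_add_integral hw hβ hg (hh.intervalIntegrable 0 T) hx hgh ht) (by linarith)
    _ ≤ 2 ^ (q - 1) * ((‖x 0‖ + pathSup w T + pathSup β T) ^ q
          + (∫ s in (0:ℝ)..t, h s) ^ q) := add_rpow_le_two_rpow hR hH hq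
    _ ≤ 2 ^ (q - 1) * ((‖x 0‖ + pathSup w T + pathSup β T) ^ q
          + t ^ (q - 1) * ∫ s in (0:ℝ)..t, h s ^ q) := by
        gcongr; exact intervalIntegral_rpow_le_mul_integral_rpow hh hh0 hq ht.1
    _ ≤ _ := by gcongr; exacts [ht.1, ht.2]

end PathSup

section ParticleSystem

variable {d n : ℕ}

def empiricalMoment (x : Fin n → ℝ → EuclideanSpace ℝ (Fin d)) (q s : ℝ) : ℝ :=
  (1 / (n : ℝ)) * ∑ j, ‖x j s‖ ^ q

def driftBound (c₁ p : ℝ) (x : Fin n → ℝ → EuclideanSpace ℝ (Fin d)) (k : Fin n) (s : ℝ) :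
    ℝ :=
  c₁ * (1 + ‖x k s‖ + empiricalMoment x p s ^ (1 / max 1 p))

variable {x : Fin n → ℝ → EuclideanSpace ℝ (Fin d)}

lemma empiricalMoment_nonneg (x : Fin n → ℝ → EuclideanSpace ℝ (Fin d)) (q s : ℝ) :
    0 ≤ empiricalMoment x q s :=
  mul_nonneg (by positivity) (Finset.sum_nonneg fun j _ => Real.rpow_nonneg (norm_nonneg _) q)

lemma continuous_empiricalMoment (hx : ∀ k, Continuous (x k)) {q : ℝ} (hq : 0 ≤ q) :
    Continuous (empiricalMoment x q) :=
  continuous_const.mul <| continuous_finsetSum _ fun j _ =>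
    (hx j).norm.rpow_const fun _ => Or.inr hq

lemma driftBound_nonneg {c₁ : ℝ} (hc₁ : 0 ≤ c₁) (p : ℝ)
    (x : Fin n → ℝ → EuclideanSpace ℝ (Fin d)) (k : Fin n) (s : ℝ) :
    0 ≤ driftBound c₁ p x k s :=
  mul_nonneg hc₁ <| add_nonneg (add_nonneg zero_le_one (norm_nonneg _))
    (Real.rpow_nonneg (empiricalMoment_nonneg x p s) _)

lemma continuous_driftBound (hx : ∀ k, Continuous (x k)) (c₁ : ℝ) {p : ℝ} (hp : 0 ≤ p)
    (k : Fin n) : Continuous (driftBound c₁ p x k) :=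
  continuous_const.mul <| (continuous_const.add (hx k).norm).add <|
    (continuous_empiricalMoment hx hp).rpow_const fun _ => Or.inr (by positivity)

lemma mean_driftBound_rpow_le (hn : n ≠ 0) {c₁ p q : ℝ} (hc₁ : 0 ≤ c₁) (hp : 0 ≤ p)
    (hq : max 1 p ≤ q) (s : ℝ) :
    (1 / (n:ℝ)) * ∑ k, driftBound c₁ p x k s ^ q
      ≤ 2 * 3 ^ (q - 1) * c₁ ^ q * (1 + empiricalMoment x q s) := by
  have hq1 : 1 ≤ q := (le_max_left _ _).trans hq
  set M := empiricalMoment x q s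
  have hθ : (empiricalMoment x p s ^ (1 / max 1 p)) ^ q ≤ 1 + M :=
    rpow_mean_rpow_le_one_add_mean_rpow hn (fun j => norm_nonneg (x j s)) hp hq
  have hpointwise (k : Fin n) : driftBound c₁ p x k s ^ q
      ≤ 3 ^ (q - 1) * c₁ ^ q * ((2 + M) + ‖x k s‖ ^ q) := by
    have hθ0 := Real.rpow_nonneg (empiricalMoment_nonneg x p s) (1 / max 1 p)
    have hsum := add_add_rpow_le_three_rpow zero_le_one (norm_nonneg (x k s)) hθ0 hq1
    rw [Real.one_rpow] at hsum
    rw [driftBound, Real.mul_rpow hc₁ (by positivity)]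
    calc c₁ ^ q * (1 + ‖x k s‖ + empiricalMoment x p s ^ (1 / max 1 p)) ^ q
        ≤ c₁ ^ q * (3 ^ (q - 1) * (1 + ‖x k s‖ ^ q + (1 + M))) := by
          gcongr; exact hsum.trans (by gcongr)
      _ = _ := by ring
  calc (1 / (n:ℝ)) * ∑ k, driftBound c₁ p x k s ^ q
      ≤ (1 / (n:ℝ)) * ∑ k, 3 ^ (q - 1) * c₁ ^ q * ((2 + M) + ‖x k s‖ ^ q) := by
        gcongr with k; exact hpointwise k
    _ = 3 ^ (q - 1) * c₁ ^ q * ((2 + M) + M) := by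
        rw [← Finset.mul_sum, mul_left_comm, mean_const_add hn]; rfl
    _ = _ := by ring

lemma integral_mean_driftBound_rpow_le (hn : n ≠ 0) (hx : ∀ k, Continuous (x k))
    {c₁ p q t T : ℝ} (hc₁ : 0 ≤ c₁) (hp : 0 ≤ p) (hq : max 1 p ≤ q) (ht : t ∈ Icc 0 T) :
    ∫ s in (0:ℝ)..t, (1 / (n:ℝ)) * ∑ k, driftBound c₁ p x k s ^ q
      ≤ 2 * 3 ^ (q - 1) * c₁ ^ q * (T + ∫ s in (0:ℝ)..t, empiricalMoment x q s) := by
  have hq0 : 0 ≤ q := zero_le_one.trans ((le_max_left _ _).trans hq)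
  have hM : IntervalIntegrable (empiricalMoment x q) volume 0 t :=
    (continuous_empiricalMoment hx hq0).intervalIntegrable 0 t
  have hdrift : Continuous fun s => (1 / (n:ℝ)) * ∑ k, driftBound c₁ p x k s ^ q :=
    continuous_const.mul <| continuous_finsetSum _ fun k _ =>
      (continuous_driftBound hx c₁ hp k).rpow_const fun _ => Or.inr hq0
  calc _ ≤ ∫ s in (0:ℝ)..t, 2 * 3 ^ (q - 1) * c₁ ^ q * (1 + empiricalMoment x q s) :=
        intervalIntegral.integral_mono_on ht.1 (hdrift.intervalIntegrable 0 t)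
          (((continuous_const.intervalIntegrable 0 t).add hM).const_mul _)
          fun s _ => mean_driftBound_rpow_le hn hc₁ hp hq s
    _ = 2 * 3 ^ (q - 1) * c₁ ^ q * (t + ∫ s in (0:ℝ)..t, empiricalMoment x q s) := by
        rw [intervalIntegral.integral_const_mul, intervalIntegral.integral_add
          (continuous_const.intervalIntegrable 0 t) hM]
        simp
    _ ≤ _ := by gcongr; exact ht.2

lemma empiricalMoment_le_mean_pathSup_rpow (hx : ∀ k, Continuous (x k)) {q t : ℝ} (hq : 0 ≤ q)
    (ht : 0 ≤ t) : empiricalMoment x q t ≤ (1 / (n:ℝ)) * ∑ k, pathSup (x k) t ^ q := by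
  unfold empiricalMoment
  gcongr with k
  exact norm_le_pathSup (hx k) ⟨ht, le_rfl⟩

lemma mean_pathSup_rpow_le (hn : n ≠ 0) {w : Fin n → ℝ → EuclideanSpace ℝ (Fin d)}
    {β : ℝ → EuclideanSpace ℝ (Fin d)} {g : Fin n → ℝ → EuclideanSpace ℝ (Fin d)}
    {T c₁ p q t : ℝ} (hx : ∀ k, Continuous (x k)) (hw : ∀ k, Continuous (w k))
    (hβ : Continuous β) (hg : ∀ k, IntervalIntegrable (g k) volume 0 T)
    (hxg : ∀ k, ∀ t ∈ Icc 0 T, x k t = x k 0 + (∫ s in (0:ℝ)..t, g k s) + w k t + β t)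
    (hgb : ∀ᵐ s ∂(volume.restrict (Icc 0 T)), ∀ k, ‖g k s‖ ≤ driftBound c₁ p x k s)
    (hc₁ : 0 ≤ c₁) (hp : 0 ≤ p) (hq : max 1 p ≤ q) (ht : t ∈ Icc 0 T) :
    (1 / (n:ℝ)) * ∑ k, pathSup (x k) t ^ q
      ≤ 6 ^ (q - 1) * ((1 / (n:ℝ)) * ∑ k, ‖x k 0‖ ^ q
          + (1 / (n:ℝ)) * ∑ k, pathSup (w k) T ^ q + pathSup β T ^ q)
        + 2 * 6 ^ (q - 1) * T ^ (q - 1) * c₁ ^ q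
          * (T + ∫ s in (0:ℝ)..t, empiricalMoment x q s) := by
  have hq1 : 1 ≤ q := (le_max_left _ _).trans hq
  have hT : 0 ≤ T := ht.1.trans ht.2
  set R : Fin n → ℝ := fun k => ‖x k 0‖ + pathSup (w k) T + pathSup β T
  have hdrift (k : Fin n) : Continuous fun s => driftBound c₁ p x k s ^ q :=
    (continuous_driftBound hx c₁ hp k).rpow_const fun _ => Or.inr (by linarith)
  have hR : (1 / (n:ℝ)) * ∑ k, R k ^ q ≤ 3 ^ (q - 1) * ((1 / (n:ℝ)) * ∑ k, ‖x k 0‖ ^ q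
      + (1 / (n:ℝ)) * ∑ k, pathSup (w k) T ^ q + pathSup β T ^ q) :=
    mean_add_add_rpow_le hn (fun _ => norm_nonneg _) (fun k => pathSup_nonneg _ _)
      (pathSup_nonneg _ _) hq1
  have hmean_integral : (1 / (n:ℝ)) * ∑ k, ∫ s in (0:ℝ)..t, driftBound c₁ p x k s ^ q
      = ∫ s in (0:ℝ)..t, (1 / (n:ℝ)) * ∑ k, driftBound c₁ p x k s ^ q := by
    rw [intervalIntegral.integral_const_mul, intervalIntegral.integral_finsetSum
      fun k _ => (hdrift k).intervalIntegrable 0 t]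
  have h6 : (6:ℝ) ^ (q - 1) = 2 ^ (q - 1) * 3 ^ (q - 1) := by
    rw [← Real.mul_rpow (by norm_num) (by norm_num)]; norm_num
  calc (1 / (n:ℝ)) * ∑ k, pathSup (x k) t ^ q
      ≤ (1 / (n:ℝ)) * ∑ k, 2 ^ (q - 1) * (R k ^ q
          + T ^ (q - 1) * ∫ s in (0:ℝ)..t, driftBound c₁ p x k s ^ q) := by
        gcongr with k
        exact pathSup_rpow_le (hw k) hβ (hg k) (continuous_driftBound hx c₁ hp k)
          (driftBound_nonneg hc₁ p x k) (hxg k) (hgb.mono fun s hs => hs k) hq1 ht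
    _ = 2 ^ (q - 1) * ((1 / (n:ℝ)) * ∑ k, R k ^ q) + 2 ^ (q - 1) * T ^ (q - 1)
          * ∫ s in (0:ℝ)..t, (1 / (n:ℝ)) * ∑ k, driftBound c₁ p x k s ^ q := by
        rw [← hmean_integral]
        simp only [Finset.mul_sum, Finset.sum_add_distrib, mul_add]
        congr 1 <;> refine Finset.sum_congr rfl fun k _ => by ring
    _ ≤ 2 ^ (q - 1) * (3 ^ (q - 1) * ((1 / (n:ℝ)) * ∑ k, ‖x k 0‖ ^ q
          + (1 / (n:ℝ)) * ∑ k, pathSup (w k) T ^ q + pathSup β T ^ q))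
        + 2 ^ (q - 1) * T ^ (q - 1)
          * (2 * 3 ^ (q - 1) * c₁ ^ q * (T + ∫ s in (0:ℝ)..t, empiricalMoment x q s)) := by
        gcongr
        exact integral_mean_driftBound_rpow_le hn hx hc₁ hp hq ht
    _ = _ := by rw [h6]; ring

end ParticleSystem

/-- Pathwise Gronwall-type estimate for interacting particle systems: averaged bound. -/
theorem particle_system_averaged_estimate
    (T c₁ p p' : ℝ) (hT : 0 < T) (hc₁ : 0 < c₁) (hp : 0 < p) (hp' : max 1 p ≤ p') :
    ∃ C : ℝ, ∀ (d : ℕ) (n : ℕ), 1 ≤ n →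
      ∀ (x w : Fin n → ℝ → EuclideanSpace ℝ (Fin d)) (β : ℝ → EuclideanSpace ℝ (Fin d))
        (g : Fin n → ℝ → EuclideanSpace ℝ (Fin d)),
      (∀ k, Continuous (x k)) → (∀ k, Continuous (w k)) → Continuous β →
      (∀ k, w k 0 = 0) → β 0 = 0 →
      (∀ k, IntervalIntegrable (g k) volume 0 T) →
      (∀ k, ∀ t ∈ Icc (0 : ℝ) T,
        x k t = x k 0 + (∫ s in (0 : ℝ)..t, g k s) + w k t + β t) →
      (∀ᵐ s ∂(volume.restrict (Icc (0 : ℝ) T)), ∀ k,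
        ‖g k s‖ ≤ c₁ * (1 + ‖x k s‖
          + ((1 / (n : ℝ)) * ∑ j : Fin n, ‖x j s‖ ^ p) ^ (1 / max 1 p))) →
      (1 / (n : ℝ)) * ∑ k : Fin n, pathSup (x k) T ^ p' ≤
        C * (1 + (1 / (n : ℝ)) * ∑ k : Fin n, ‖x k 0‖ ^ p'
          + (1 / (n : ℝ)) * ∑ k : Fin n, pathSup (w k) T ^ p'
          + pathSup β T ^ p') := by
  have hq : 0 ≤ p' := zero_le_one.trans ((le_max_left _ _).trans hp')
  -- `2^(p'-1)` from splitting `R_k + ∫ h_k`, `T^(p'-1)` from Jensen in time,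
  -- `2·3^(p'-1)·c₁^p'` from the averaged drift bound.
  set K := 2 * 6 ^ (p' - 1) * T ^ (p' - 1) * c₁ ^ p'
  have hK : 0 ≤ K := by positivity
  refine ⟨(6 ^ (p' - 1) + K * T) * Real.exp (K * T),
    fun d n hn x w β g hx hw hβ _ _ hg hxg hgb => ?_⟩
  set D := (1 / (n : ℝ)) * ∑ k, ‖x k 0‖ ^ p' + (1 / (n : ℝ)) * ∑ k, pathSup (w k) T ^ p'
    + pathSup β T ^ p'
  have hD : 0 ≤ D :=
    add_nonneg (add_nonneg (empiricalMoment_nonneg (fun k _ => x k 0) p' 0)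
      (mul_nonneg (by positivity) (Finset.sum_nonneg fun k _ =>
        Real.rpow_nonneg (pathSup_nonneg _ _) _))) (Real.rpow_nonneg (pathSup_nonneg β T) p')
  set φ := fun t => (1 / (n : ℝ)) * ∑ k, pathSup (x k) t ^ p'
  have hφ (t : ℝ) (ht : t ∈ Icc 0 T) :
      φ t ≤ (6 ^ (p' - 1) * D + K * T) + K * ∫ s in (0:ℝ)..t, empiricalMoment x p' s :=
    (mean_pathSup_rpow_le (by omega) hx hw hβ hg hxg hgb hc₁.le hp.le hp' ht).trans_eq (by ring)
  calc φ T ≤ (6 ^ (p' - 1) * D + K * T) + K * ∫ s in (0:ℝ)..T, empiricalMoment x p' s :=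
        hφ T ⟨hT.le, le_rfl⟩
    _ ≤ (6 ^ (p' - 1) * D + K * T) * Real.exp (K * T) :=
        add_mul_integral_le_mul_exp_of_le_add_mul_integral (continuous_empiricalMoment hx hq) hK
          hT.le fun t ht => (empiricalMoment_le_mean_pathSup_rpow hx hq ht.1).trans (hφ t ht)
    _ ≤ (6 ^ (p' - 1) + K * T) * (1 + D) * Real.exp (K * T) := by
        gcongr
        nlinarith [mul_nonneg (mul_nonneg hK hT.le) hD,
          Real.rpow_nonneg (by norm_num : (0:ℝ) ≤ 6) (p' - 1)]
    _ = _ := by ring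

end
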